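/- Let u, w be smooth, divergence-free, mean-free periodic vector fields on the two-dimensional torus 𝕋². Then the Jacobi-type identity ∫_{𝕋²} ((u·∇)w)·Δw dx + ∫_{𝕋²} ((w·∇)u)·Δw dx + ∫_{𝕋²} ((w·∇)w)·Δu dx = 0 holds. -/

import Mathlib

open MeasureTheory Filter
open scoped RealInnerProductSpace Topology

noncomputable section

abbrev E2 := EuclideanSpace ℝ (Fin 2)

/-- The fundamental domain (unit square) of the torus `𝕋² = ℝ²/ℤ²`. -/
def cube : Set E2 := {x | ∀ i, x i ∈ Set.Icc (0:ℝ) 1}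

/-- The `i`-th standard basis vector of `ℝ²`. -/
def e2 (i : Fin 2) : E2 := EuclideanSpace.single i 1

/-- `ℤ²`-periodicity of a vector field (periodicity under unit coordinate translations). -/
def PeriodicVF (u : E2 → E2) : Prop := ∀ (x : E2) (i : Fin 2), u (x + e2 i) = u x

/-- `ℤ²`-periodicity of a scalar field. -/
def PeriodicF (p : E2 → ℝ) : Prop := ∀ (x : E2) (i : Fin 2), p (x + e2 i) = p x

/-- Partial derivative of a vector field in the `i`-th coordinate direction. -/
def pdir (u : E2 → E2) (i : Fin 2) (x : E2) : E2 := fderiv ℝ u x (e2 i)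

/-- Divergence of a vector field. -/
def divg (u : E2 → E2) (x : E2) : ℝ := ∑ i, pdir u i x i

def DivFree (u : E2 → E2) : Prop := ∀ x, divg u x = 0

def MeanFree (u : E2 → E2) : Prop := (∫ x in cube, u x) = 0

/-- Componentwise Laplacian. -/
def lap (u : E2 → E2) (x : E2) : E2 := ∑ i, pdir (pdir u i) i x

/-- The `L²` norm on the torus (integral over the fundamental domain). -/
def L2 (u : E2 → E2) : ℝ := Real.sqrt (∫ x in cube, ‖u x‖ ^ 2)

/-- The `L²` norm of the gradient `‖∇u‖_{L²}`. -/
def gradL2 (u : E2 → E2) : ℝ := Real.sqrt (∫ x in cube, ∑ i, ‖pdir u i x‖ ^ 2)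

/-- `‖Δu‖_{L²}`. -/
def lapL2 (u : E2 → E2) : ℝ := L2 (lap u)

/-- The `L^∞` norm (for continuous periodic fields). -/
def Linf (u : E2 → E2) : ℝ := ⨆ x : E2, ‖u x‖

/-- Full Sobolev `H^k` norm on the torus. -/
def Hnorm (k : ℕ) (u : E2 → E2) : ℝ :=
  Real.sqrt (∑ j ∈ Finset.range (k+1), ∫ x in cube, ‖iteratedFDeriv ℝ j u x‖ ^ 2)

/-- The trilinear form `b(u,v,w) = ∫ ((u·∇)v)·w dx`. -/
def triB (u v w : E2 → E2) : ℝ := ∫ x in cube, ⟪fderiv ℝ v x (u x), w x⟫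

/-- The smallest eigenvalue of the Stokes operator on `𝕋²`. -/
def lam1 : ℝ := 4 * Real.pi ^ 2

/-- The Grashof number. -/
def grashof (ν : ℝ) (f : E2 → E2) : ℝ := L2 f / (ν ^ 2 * lam1)

/-- An interpolant operator satisfying `‖φ − I_h φ‖_{L²} ≤ c₁ h ‖∇φ‖_{L²}` on `H¹` fields. -/
def InterpBound (Ih : (E2 → E2) →ₗ[ℝ] (E2 → E2)) (c₁ h : ℝ) : Prop :=
  ∀ φ : E2 → E2, ContDiff ℝ 1 φ → PeriodicVF φ →
    L2 (fun x => φ x - Ih φ x) ≤ c₁ * h * gradL2 φ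

/-- The 2D Navier–Stokes equations at time `t`. -/
def NSEeq (ν : ℝ) (f : E2 → E2) (u : ℝ → E2 → E2) (p : ℝ → E2 → ℝ) (t : ℝ) : Prop :=
  ∀ x, deriv (fun s => u s x) t + fderiv ℝ (u t) x (u t x) + gradient (p t) x
      = ν • lap (u t) x + f x

/-- The data-assimilation Navier–Stokes–Voigt equations at time `t`. -/
def VoigtEq (ν α μ : ℝ) (f : E2 → E2) (Ih : (E2 → E2) →ₗ[ℝ] (E2 → E2))
    (u v : ℝ → E2 → E2) (q : ℝ → E2 → ℝ) (t : ℝ) : Prop :=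
  ∀ x, deriv (fun s => v s x) t - α ^ 2 • lap (fun y => deriv (fun s => v s y) t) x
      + fderiv ℝ (v t) x (v t x) + gradient (q t) x
      = ν • lap (v t) x + f x + μ • (Ih (u t) x - Ih (v t) x)

/-- `u` is a classical solution of 2D NSE (with pressure `p`) on the time set `s`. -/
def IsNSESolOn (ν : ℝ) (f : E2 → E2) (u : ℝ → E2 → E2) (p : ℝ → E2 → ℝ) (s : Set ℝ) : Prop :=
  ContDiff ℝ (⊤:ℕ∞) (Function.uncurry u) ∧
  (∀ t, PeriodicVF (u t) ∧ DivFree (u t) ∧ MeanFree (u t)) ∧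
  (∀ t, PeriodicF (p t)) ∧
  ∀ t ∈ s, NSEeq ν f u p t

/-- `v` is a classical solution of the data-assimilation NSV system (with pressure `q`),
driven by observations of `u` through `Ih`, on the time set `s`. -/
def IsVoigtSolOn (ν α μ : ℝ) (f : E2 → E2) (Ih : (E2 → E2) →ₗ[ℝ] (E2 → E2))
    (u v : ℝ → E2 → E2) (q : ℝ → E2 → ℝ) (s : Set ℝ) : Prop :=
  ContDiff ℝ (⊤:ℕ∞) (Function.uncurry v) ∧
  (∀ t, PeriodicVF (v t) ∧ DivFree (v t) ∧ MeanFree (v t)) ∧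
  (∀ t, PeriodicF (q t)) ∧
  ∀ t ∈ s, VoigtEq ν α μ f Ih u v q t

/-! Integrating by parts once turns each term `∫ ((a·∇)b)·Δc` into `-∫ ∇((a·∇)b) : ∇c`, and
`∂ᵢ((a·∇)b) = (∂ᵢa·∇)b + (a·∇)∂ᵢb`. The first-order parts of the three terms cancel pointwise,
by an identity for traceless `2 × 2` matrices applied to `∇u` and `∇w`. The second-order parts add
up to `(u·∇)(½|∇w|²) + (w·∇)(∇u : ∇w)`, and `∫ (v·∇)φ = -∫ φ div v = 0` for periodic
divergence-free `v`. -/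

lemma e2_apply (i j : Fin 2) : e2 i j = if j = i then 1 else 0 := by
  simp [e2]

lemma sum_smul_e2 (v : E2) : ∑ j, v j • e2 j = v := by
  simpa [EuclideanSpace.basisFun_apply, e2] using (EuclideanSpace.basisFun (Fin 2) ℝ).sum_repr v

lemma ContinuousLinearMap.apply_eq_sum_e2 {F : Type*} [AddCommGroup F] [Module ℝ F]
    [TopologicalSpace F] (M : E2 →L[ℝ] F) (v : E2) : M v = ∑ j, v j • M (e2 j) := by
  conv_lhs => rw [← sum_smul_e2 v]
  simp only [map_sum, map_smul]

def toE2 : ℝ × ℝ ≃ᵐ E2 :=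
  MeasurableEquiv.finTwoArrow.symm.trans (MeasurableEquiv.toLp 2 (Fin 2 → ℝ))

lemma toE2_apply (p : ℝ × ℝ) : toE2 p = p.1 • e2 0 + p.2 • e2 1 := by
  ext k
  fin_cases k <;> simp [toE2, e2_apply]

lemma measurePreserving_toE2 : MeasurePreserving toE2 volume volume :=
  ((EuclideanSpace.volume_preserving_symm_measurableEquiv_toLp (Fin 2)).symm _).comp
    ((volume_preserving_finTwoArrow ℝ).symm _)

lemma continuous_toE2 : Continuous toE2 := by
  rw [funext toE2_apply]
  fun_prop

lemma toE2_preimage_cube : toE2 ⁻¹' cube = Set.Icc (0:ℝ) 1 ×ˢ Set.Icc (0:ℝ) 1 := by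
  ext p
  simp [cube, toE2_apply, Fin.forall_fin_two, e2_apply, Prod.le_def]
  tauto

lemma isCompact_cube : IsCompact cube := by
  rw [← toE2.image_preimage cube, toE2_preimage_cube]
  exact (isCompact_Icc.prod isCompact_Icc).image continuous_toE2

lemma measurableSet_cube : MeasurableSet cube := isCompact_cube.isClosed.measurableSet

lemma integrableOn_cube {F : Type*} [NormedAddCommGroup F] {f : E2 → F} (hf : Continuous f) :
    IntegrableOn f cube :=
  hf.continuousOn.integrableOn_compact isCompact_cube

lemma setIntegral_cube_eq_integral_integral {f : E2 → ℝ} (hf : Continuous f) :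
    ∫ x in cube, f x = ∫ a in Set.Icc (0:ℝ) 1, ∫ b in Set.Icc (0:ℝ) 1, f (toE2 (a, b)) := by
  rw [← measurePreserving_toE2.setIntegral_preimage_emb toE2.measurableEmbedding,
    toE2_preimage_cube, Measure.volume_eq_prod, setIntegral_prod]
  exact (hf.comp continuous_toE2).continuousOn.integrableOn_compact
    (isCompact_Icc.prod isCompact_Icc)

lemma setIntegral_cube_eq_integral_integral_swap {f : E2 → ℝ} (hf : Continuous f) :
    ∫ x in cube, f x = ∫ b in Set.Icc (0:ℝ) 1, ∫ a in Set.Icc (0:ℝ) 1, f (toE2 (a, b)) := by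
  rw [setIntegral_cube_eq_integral_integral hf]
  refine integral_integral_swap ?_
  rw [Measure.prod_restrict, ← Measure.volume_eq_prod]
  exact (hf.comp continuous_toE2).continuousOn.integrableOn_compact
    (isCompact_Icc.prod isCompact_Icc)

lemma integral_fderiv_apply_eq_zero_of_periodic {E : Type*} [NormedAddCommGroup E]
    [NormedSpace ℝ E] {f : E → ℝ} (hf : ContDiff ℝ 1 f) {v : E} (hp : ∀ x, f (x + v) = f x)
    (x : E) : ∫ t in Set.Icc (0:ℝ) 1, fderiv ℝ f (x + t • v) v = 0 := by
  have hderiv (t : ℝ) : HasDerivAt (fun s : ℝ => f (x + s • v)) (fderiv ℝ f (x + t • v) v) t := by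
    have hline : HasDerivAt (fun s : ℝ => x + s • v) v t := by
      simpa using ((hasDerivAt_id t).smul_const v).const_add x
    exact (hf.differentiable one_ne_zero _).hasFDerivAt.comp_hasDerivAt t hline
  have hcont : Continuous fun t : ℝ => fderiv ℝ f (x + t • v) v :=
    ((hf.continuous_fderiv one_ne_zero).clm_apply continuous_const).comp (by fun_prop)
  rw [integral_Icc_eq_integral_Ioc, ← intervalIntegral.integral_of_le zero_le_one,
    intervalIntegral.integral_eq_sub_of_hasDerivAt (fun t _ => hderiv t)
      (hcont.intervalIntegrable 0 1)]
  simp [hp]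

lemma setIntegral_cube_fderiv_eq_zero {f : E2 → ℝ} (hf : ContDiff ℝ 1 f) (i : Fin 2)
    (hp : ∀ x, f (x + e2 i) = f x) : ∫ x in cube, fderiv ℝ f x (e2 i) = 0 := by
  have hcont : Continuous fun x => fderiv ℝ f x (e2 i) :=
    (hf.continuous_fderiv one_ne_zero).clm_apply continuous_const
  have hline := integral_fderiv_apply_eq_zero_of_periodic hf hp
  fin_cases i
  · rw [setIntegral_cube_eq_integral_integral_swap hcont]
    simp_all [toE2_apply, add_comm (_ • e2 0)]
  · rw [setIntegral_cube_eq_integral_integral hcont]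
    simp_all [toE2_apply]

lemma fderiv_add_of_periodic {E F : Type*} [NormedAddCommGroup E] [NormedSpace ℝ E]
    [NormedAddCommGroup F] [NormedSpace ℝ F] {f : E → F} {c : E} (hp : ∀ x, f (x + c) = f x)
    (x : E) : fderiv ℝ f (x + c) = fderiv ℝ f x := by
  rw [← fderiv_comp_add_right, funext hp]

section VectorCalculus

variable {u a b F G : E2 → E2}

lemma PeriodicVF.pdir (hup : PeriodicVF u) (i : Fin 2) : PeriodicVF (pdir u i) := fun x j => by
  simp only [_root_.pdir, fderiv_add_of_periodic (hup · j)]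

lemma ContDiff.pdir {m n : WithTop ℕ∞} (hu : ContDiff ℝ n u) (hmn : m + 1 ≤ n) (i : Fin 2) :
    ContDiff ℝ m (_root_.pdir u i) :=
  (hu.fderiv_right hmn).clm_apply contDiff_const

lemma ContDiff.continuous_pdir (hu : ContDiff ℝ 1 u) (i : Fin 2) : Continuous (_root_.pdir u i) :=
  (hu.continuous_fderiv one_ne_zero).clm_apply continuous_const

lemma fderiv_pdir_apply (hu : ContDiff ℝ 2 u) (i : Fin 2) (x v : E2) :
    fderiv ℝ (pdir u i) x v = fderiv ℝ (fderiv ℝ u) x v (e2 i) := by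
  have hd : Differentiable ℝ (fderiv ℝ u) :=
    (hu.fderiv_right (m := 1) (by norm_num)).differentiable one_ne_zero
  rw [show pdir u i = fun y => fderiv ℝ u y (e2 i) from rfl,
    fderiv_clm_apply (hd x) (differentiableAt_const _)]
  simp

/-- The advection term `(a·∇)b`. -/
def advect (a b : E2 → E2) (x : E2) : E2 := fderiv ℝ b x (a x)

lemma ContDiff.advect {m n : WithTop ℕ∞} (ha : ContDiff ℝ m a) (hb : ContDiff ℝ n b)
    (hmn : m + 1 ≤ n) : ContDiff ℝ m (_root_.advect a b) :=
  (hb.fderiv_right hmn).clm_apply ha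

lemma PeriodicVF.advect (hap : PeriodicVF a) (hbp : PeriodicVF b) :
    PeriodicVF (advect a b) := fun x j => by
  simp only [_root_.advect, fderiv_add_of_periodic (hbp · j), hap x j]

lemma pdir_advect (ha : Differentiable ℝ a) (hb : ContDiff ℝ 2 b) (i : Fin 2) (x : E2) :
    pdir (advect a b) i x = fderiv ℝ b x (pdir a i x) + fderiv ℝ (pdir b i) x (a x) := by
  have hd : Differentiable ℝ (fderiv ℝ b) :=
    (hb.fderiv_right (m := 1) (by norm_num)).differentiable one_ne_zero
  have hsymm := hb.contDiffAt.isSymmSndFDerivAt (x := x) (by simp)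
  rw [fderiv_pdir_apply hb, ← hsymm, _root_.pdir,
    show advect a b = fun y => fderiv ℝ b y (a y) from rfl, fderiv_clm_apply (hd x) (ha x)]
  simp [_root_.pdir]

/-- The pointwise Frobenius product `∇F : ∇G`. -/
def gradInner (F G : E2 → E2) (x : E2) : ℝ := ∑ i, ⟪pdir F i x, pdir G i x⟫

lemma ContDiff.gradInner {m n : WithTop ℕ∞} (hF : ContDiff ℝ n F) (hG : ContDiff ℝ n G)
    (hmn : m + 1 ≤ n) : ContDiff ℝ m (_root_.gradInner F G) :=
  ContDiff.sum fun i _ => (hF.pdir hmn i).inner ℝ (hG.pdir hmn i)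

lemma ContDiff.continuous_gradInner (hF : ContDiff ℝ 1 F) (hG : ContDiff ℝ 1 G) :
    Continuous (_root_.gradInner F G) :=
  continuous_finsetSum _ fun i _ => (hF.continuous_pdir i).inner (hG.continuous_pdir i)

lemma PeriodicVF.gradInner (hFp : PeriodicVF F) (hGp : PeriodicVF G) :
    PeriodicF (gradInner F G) := fun x j => by
  simp only [_root_.gradInner, hFp.pdir _ x j, hGp.pdir _ x j]

lemma fderiv_gradInner_apply (hF : ContDiff ℝ 2 F) (hG : ContDiff ℝ 2 G) (x v : E2) :
    fderiv ℝ (gradInner F G) x v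
      = ∑ i, (⟪pdir F i x, fderiv ℝ (pdir G i) x v⟫ + ⟪fderiv ℝ (pdir F i) x v, pdir G i x⟫) := by
  have hd {H : E2 → E2} (hH : ContDiff ℝ 2 H) (i : Fin 2) : Differentiable ℝ (pdir H i) :=
    (hH.pdir (m := 1) (by norm_num) i).differentiable one_ne_zero
  rw [show gradInner F G = fun y => ∑ i, ⟪pdir F i y, pdir G i y⟫ from rfl,
    fderiv_fun_sum fun i _ => ((hd hF i).inner ℝ (hd hG i)) x, sum_apply]
  exact Finset.sum_congr rfl fun i _ => fderiv_inner_apply ℝ (hd hF i x) (hd hG i x) v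

end VectorCalculus

section TorusIntegrals

variable {u v F G : E2 → E2} {φ : E2 → ℝ}

lemma fderiv_coord_apply {x : E2} (hF : DifferentiableAt ℝ F x) (j : Fin 2) (y : E2) :
    fderiv ℝ (fun z => F z j) x y = fderiv ℝ F x y j := by
  rw [show (fun z => F z j) = EuclideanSpace.proj (𝕜 := ℝ) j ∘ F from rfl,
    fderiv_comp x (EuclideanSpace.proj j).differentiableAt hF, ContinuousLinearMap.fderiv]
  rfl

lemma setIntegral_cube_divg_eq_zero (hF : ContDiff ℝ 1 F) (hFp : PeriodicVF F) :
    ∫ x in cube, divg F x = 0 := by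
  have hcoord (j : Fin 2) : ContDiff ℝ 1 fun z => F z j :=
    (EuclideanSpace.proj (𝕜 := ℝ) j).contDiff.comp hF
  have hdivg (x : E2) : divg F x = ∑ j, fderiv ℝ (fun z => F z j) x (e2 j) := by
    simp only [divg, pdir, fderiv_coord_apply (hF.differentiable one_ne_zero x)]
  simp_rw [hdivg]
  rw [integral_finsetSum _ fun j _ => integrableOn_cube
    (((hcoord j).continuous_fderiv one_ne_zero).clm_apply continuous_const)]
  exact Finset.sum_eq_zero fun j _ =>
    setIntegral_cube_fderiv_eq_zero (hcoord j) j fun x => by simp only [hFp x j]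

lemma divg_smul {x : E2} (hφ : DifferentiableAt ℝ φ x) (hv : DifferentiableAt ℝ v x) :
    divg (fun y => φ y • v y) x = fderiv ℝ φ x (v x) + φ x * divg v x := by
  simp only [divg, pdir, fderiv_fun_smul hφ hv]
  rw [(fderiv ℝ φ x).apply_eq_sum_e2 (v x)]
  simp [Fin.sum_univ_two]
  ring

lemma setIntegral_cube_fderiv_apply_eq_zero_of_divFree (hφ : ContDiff ℝ 1 φ)
    (hφp : PeriodicF φ) (hv : ContDiff ℝ 1 v) (hvp : PeriodicVF v) (hvd : DivFree v) :
    ∫ x in cube, fderiv ℝ φ x (v x) = 0 := by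
  have hdivg (x : E2) : divg (fun y => φ y • v y) x = fderiv ℝ φ x (v x) := by
    rw [divg_smul (hφ.differentiable one_ne_zero x) (hv.differentiable one_ne_zero x), hvd x,
      mul_zero, add_zero]
  simp_rw [← hdivg]
  exact setIntegral_cube_divg_eq_zero (hφ.smul hv) fun x j => by simp only [hφp x j, hvp x j]

lemma setIntegral_cube_inner_pdir (hF : ContDiff ℝ 1 F) (hG : ContDiff ℝ 1 G)
    (hFp : PeriodicVF F) (hGp : PeriodicVF G) (i : Fin 2) :
    ∫ x in cube, ⟪F x, pdir G i x⟫ = -∫ x in cube, ⟪pdir F i x, G x⟫ := by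
  have hleibniz (x : E2) : fderiv ℝ (fun y => ⟪F y, G y⟫) x (e2 i)
      = ⟪F x, pdir G i x⟫ + ⟪pdir F i x, G x⟫ :=
    fderiv_inner_apply ℝ (hF.differentiable one_ne_zero x) (hG.differentiable one_ne_zero x) _
  have h := setIntegral_cube_fderiv_eq_zero (hF.inner ℝ hG) i fun x => by
    simp only [hFp x i, hGp x i]
  simp_rw [hleibniz] at h
  rw [integral_add (integrableOn_cube (hF.continuous.inner (hG.continuous_pdir i)))
    (integrableOn_cube ((hF.continuous_pdir i).inner hG.continuous))] at h
  linarith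

lemma setIntegral_cube_inner_lap (hF : ContDiff ℝ 1 F) (hG : ContDiff ℝ 2 G)
    (hFp : PeriodicVF F) (hGp : PeriodicVF G) :
    ∫ x in cube, ⟪F x, lap G x⟫ = -∫ x in cube, gradInner F G x := by
  have hG1 (i : Fin 2) : ContDiff ℝ 1 (pdir G i) := hG.pdir (by norm_num) i
  simp only [lap, inner_sum, gradInner]
  rw [integral_finsetSum _ fun i _ => integrableOn_cube
      (hF.continuous.inner ((hG1 i).continuous_pdir i)),
    integral_finsetSum _ fun i _ => integrableOn_cube
      ((hF.continuous_pdir i).inner (hG1 i).continuous),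
    ← Finset.sum_neg_distrib]
  exact Finset.sum_congr rfl fun i _ => setIntegral_cube_inner_pdir hF (hG1 i) hFp (hGp.pdir i) i

end TorusIntegrals

/-- For traceless `2 × 2` matrices, `BᵀB + BBᵀ = |B|² I` and `B² = -det B · I`, so the sum below
is `tr A · (|B|² - det B)`. -/
lemma sum_inner_jacobi_of_traceless (A B : E2 →L[ℝ] E2) (hA : ∑ i, A (e2 i) i = 0)
    (hB : ∑ i, B (e2 i) i = 0) :
    ∑ i, (⟪B (A (e2 i)), B (e2 i)⟫ + ⟪A (B (e2 i)), B (e2 i)⟫ + ⟪B (B (e2 i)), A (e2 i)⟫)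
      = 0 := by
  have hBA (i : Fin 2) := B.apply_eq_sum_e2 (A (e2 i))
  have hAB (i : Fin 2) := A.apply_eq_sum_e2 (B (e2 i))
  have hBB (i : Fin 2) := B.apply_eq_sum_e2 (B (e2 i))
  simp only [Fin.sum_univ_two] at hA hB hBA hAB hBB ⊢
  rw [hBA 0, hBA 1, hAB 0, hAB 1, hBB 0, hBB 1]
  simp only [PiLp.inner_apply, RCLike.inner_apply, conj_trivial, PiLp.add_apply, PiLp.smul_apply,
    smul_eq_mul, Fin.sum_univ_two]
  linear_combination (B (e2 0) 1 ^ 2 + B (e2 0) 1 * B (e2 1) 0 + B (e2 1) 0 ^ 2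
      + 3 * B (e2 1) 1 ^ 2) * hA
    + (2 * A (e2 0) 1 * B (e2 0) 1 + A (e2 1) 0 * B (e2 0) 1 + A (e2 0) 1 * B (e2 1) 0
      + 2 * A (e2 1) 0 * B (e2 1) 0 - 3 * A (e2 0) 0 * B (e2 1) 1
      + 3 * A (e2 0) 0 * B (e2 0) 0) * hB

lemma gradInner_advect_add {u w : E2 → E2} (hu : ContDiff ℝ 2 u) (hw : ContDiff ℝ 2 w) {x : E2}
    (hud : divg u x = 0) (hwd : divg w x = 0) :
    gradInner (advect u w) w x + gradInner (advect w u) w x + gradInner (advect w w) u x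
      = fderiv ℝ (gradInner w w) x (u x) / 2 + fderiv ℝ (gradInner u w) x (w x) := by
  have hu1 : Differentiable ℝ u := hu.differentiable two_ne_zero
  have hw1 : Differentiable ℝ w := hw.differentiable two_ne_zero
  have htraceless := sum_inner_jacobi_of_traceless (fderiv ℝ u x) (fderiv ℝ w x) hud hwd
  rw [fderiv_gradInner_apply hw hw, fderiv_gradInner_apply hu hw]
  simp only [gradInner, pdir_advect hu1 hw, pdir_advect hw1 hu, pdir_advect hw1 hw,
    inner_add_left, Finset.sum_add_distrib] at htraceless ⊢
  simp only [pdir] at htraceless ⊢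
  simp only [real_inner_comm (fderiv ℝ w x (e2 _)), real_inner_comm (fderiv ℝ u x (e2 _))]
    at htraceless ⊢
  linarith

section JacobiIdentity

variable {u w : E2 → E2}

lemma integrableOn_cube_gradInner_advect {a b c : E2 → E2} (ha : ContDiff ℝ 1 a)
    (hb : ContDiff ℝ 2 b) (hc : ContDiff ℝ 1 c) : IntegrableOn (gradInner (advect a b) c) cube :=
  integrableOn_cube ((ha.advect hb (by norm_num)).continuous_gradInner hc)

lemma setIntegral_cube_advect_inner_lap {a b c : E2 → E2} (ha : ContDiff ℝ 1 a)
    (hb : ContDiff ℝ 2 b) (hc : ContDiff ℝ 2 c) (hap : PeriodicVF a) (hbp : PeriodicVF b)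
    (hcp : PeriodicVF c) :
    ∫ x in cube, ⟪fderiv ℝ b x (a x), lap c x⟫ = -∫ x in cube, gradInner (advect a b) c x :=
  setIntegral_cube_inner_lap (ha.advect hb (by norm_num)) hc (hap.advect hbp) hcp

lemma jacobi_sum_eq_neg_setIntegral_gradInner (hu : ContDiff ℝ 2 u) (hw : ContDiff ℝ 2 w)
    (hup : PeriodicVF u) (hwp : PeriodicVF w) :
    (∫ x in cube, ⟪fderiv ℝ w x (u x), lap w x⟫)
      + (∫ x in cube, ⟪fderiv ℝ u x (w x), lap w x⟫)
      + (∫ x in cube, ⟪fderiv ℝ w x (w x), lap u x⟫)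
      = -∫ x in cube, (gradInner (advect u w) w x + gradInner (advect w u) w x
          + gradInner (advect w w) u x) := by
  have hu1 : ContDiff ℝ 1 u := hu.of_le one_le_two
  have hw1 : ContDiff ℝ 1 w := hw.of_le one_le_two
  have hint₁ := integrableOn_cube_gradInner_advect hu1 hw hw1
  have hint₂ := integrableOn_cube_gradInner_advect hw1 hu hw1
  have hint₃ := integrableOn_cube_gradInner_advect hw1 hw hu1
  rw [setIntegral_cube_advect_inner_lap hu1 hw hw hup hwp hwp,
    setIntegral_cube_advect_inner_lap hw1 hu hw hwp hup hwp,
    setIntegral_cube_advect_inner_lap hw1 hw hu hwp hwp hup,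
    integral_add (hint₁.fun_add hint₂) hint₃, integral_add hint₁ hint₂]
  ring

lemma setIntegral_cube_transport_eq_zero (hu : ContDiff ℝ 2 u) (hw : ContDiff ℝ 2 w)
    (hup : PeriodicVF u) (hwp : PeriodicVF w) (hud : DivFree u) (hwd : DivFree w) :
    ∫ x in cube, (fderiv ℝ (gradInner w w) x (u x) / 2 + fderiv ℝ (gradInner u w) x (w x))
      = 0 := by
  have hu1 : ContDiff ℝ 1 u := hu.of_le one_le_two
  have hw1 : ContDiff ℝ 1 w := hw.of_le one_le_two
  have hww : ContDiff ℝ 1 (gradInner w w) := hw.gradInner hw (by norm_num)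
  have huw : ContDiff ℝ 1 (gradInner u w) := hu.gradInner hw (by norm_num)
  have hint {φ : E2 → ℝ} {v : E2 → E2} (hφ : ContDiff ℝ 1 φ) (hv : Continuous v) :
      IntegrableOn (fun x => fderiv ℝ φ x (v x)) cube :=
    integrableOn_cube ((hφ.continuous_fderiv one_ne_zero).clm_apply hv)
  rw [integral_add ((hint hww hu1.continuous).div_const 2) (hint huw hw1.continuous), integral_div,
    setIntegral_cube_fderiv_apply_eq_zero_of_divFree hww (hwp.gradInner hwp) hu1 hup hud,
    setIntegral_cube_fderiv_apply_eq_zero_of_divFree huw (hup.gradInner hwp) hw1 hwp hwd]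
  norm_num

end JacobiIdentity

theorem jacobi_identity_general (u w : E2 → E2)
    (hu : ContDiff ℝ (⊤:ℕ∞) u) (hw : ContDiff ℝ (⊤:ℕ∞) w)
    (hup : PeriodicVF u) (hwp : PeriodicVF w)
    (hud : DivFree u) (hwd : DivFree w) :
    (∫ x in cube, ⟪fderiv ℝ w x (u x), lap w x⟫)
      + (∫ x in cube, ⟪fderiv ℝ u x (w x), lap w x⟫)
      + (∫ x in cube, ⟪fderiv ℝ w x (w x), lap u x⟫) = 0 := by
  have hu2 : ContDiff ℝ 2 u := hu.of_le (WithTop.coe_le_coe.mpr le_top)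
  have hw2 : ContDiff ℝ 2 w := hw.of_le (WithTop.coe_le_coe.mpr le_top)
  rw [jacobi_sum_eq_neg_setIntegral_gradInner hu2 hw2 hup hwp, neg_eq_zero,
    setIntegral_congr_fun measurableSet_cube fun x _ =>
      gradInner_advect_add hu2 hw2 (hud x) (hwd x)]
  exact setIntegral_cube_transport_eq_zero hu2 hw2 hup hwp hud hwd

/-- the Jacobi-type identity
`∫ ((u·∇)w)·Δw + ∫ ((w·∇)u)·Δw + ∫ ((w·∇)w)·Δu = 0` for smooth divergence-free
mean-free periodic fields `u, w`. -/
theorem jacobi_identity (u w : E2 → E2)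
    (hu : ContDiff ℝ (⊤:ℕ∞) u) (hw : ContDiff ℝ (⊤:ℕ∞) w)
    (hup : PeriodicVF u) (hwp : PeriodicVF w)
    (hud : DivFree u) (hwd : DivFree w)
    (hum : MeanFree u) (hwm : MeanFree w) :
    (∫ x in cube, ⟪fderiv ℝ w x (u x), lap w x⟫)
      + (∫ x in cube, ⟪fderiv ℝ u x (w x), lap w x⟫)
      + (∫ x in cube, ⟪fderiv ℝ w x (w x), lap u x⟫) = 0 :=
  jacobi_identity_general u w hu hw hup hwp hud hwd
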